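/- Let k be a field with characteristic not 2 and let A = k[x]/(x²) be the connected cochain DG algebra with |x| = 1 and zero differential. Let L be the DG A-bimodule with underlying graded bimodule A·e (e a free generator of degree 0, e·x̄ = x̄·e) and differential determined by ∂_L(e) = x̄e, and let L^∨ be the DG A-bimodule with underlying graded bimodule A·f (f a free generator of degree 0, f·x̄ = x̄·f) and differential determined by ∂_{L^∨}(f) = −x̄f. Then: (i) the maps θ : L ⊗_A L^∨ → A with θ(e ⊗ f) = 1 and ω : L^∨ ⊗_A L → A with ω(f ⊗ e) = 1 are isomorphisms of DG A-bimodules, so L is an invertible DG A-bimodule; (ii) nevertheless, L is not isomorphic to Σ^i A(φ) as a DG A-bimodule for any integer i and any DG algebra automorphism φ of A. -/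

import Mathlib

/-!
Common infrastructure: connected cochain DG algebras over a field `k`,
(left/right/bi-) DG modules, Hom-complexes, torsion functors, etc.
-/

universe u v w

open DirectSum TensorProduct

/-- A connected cochain DG algebra over a field `k`:
a ℤ-graded unital associative `k`-algebra `A = ⊕ᵢ Aⁱ` with `Aⁱ = 0` for `i < 0`,
`A⁰ = k·1`, equipped with a degree `+1` differential `d` with `d ∘ d = 0`
satisfying the graded Leibniz rule. -/
structure ConnCDGA (k : Type u) [Field k] (A : Type v) [Ring A] [Algebra k A] where
  gr : ℤ → Submodule k A
  decomp : DirectSum.Decomposition gr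
  one_mem : (1 : A) ∈ gr 0
  mul_mem : ∀ {i j : ℤ} {a b : A}, a ∈ gr i → b ∈ gr j → a * b ∈ gr (i + j)
  connected : ∀ i : ℤ, i < 0 → gr i = ⊥
  deg_zero : gr 0 = Submodule.span k {(1 : A)}
  d : A →ₗ[k] A
  d_mem : ∀ {i : ℤ} {a : A}, a ∈ gr i → d a ∈ gr (i + 1)
  d_sq : ∀ a : A, d (d a) = 0
  leibniz : ∀ {i j : ℤ} {a b : A}, a ∈ gr i → b ∈ gr j →
    d (a * b) = d a * b + ((-1 : k) ^ i) • (a * d b)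

variable {k : Type u} [Field k] {A : Type v} [Ring A] [Algebra k A]
variable {B : Type v} [Ring B] [Algebra k B]

/-- A DG algebra automorphism of a connected cochain DG algebra:
a degree-preserving `k`-algebra automorphism commuting with the differential. -/
structure IsDGAut (𝒜 : ConnCDGA k A) (φ : A → A) : Prop where
  bij : Function.Bijective φ
  map_add : ∀ x y : A, φ (x + y) = φ x + φ y
  map_mul : ∀ x y : A, φ (x * y) = φ x * φ y
  map_one : φ 1 = 1
  map_ksmul : ∀ (c : k) (x : A), φ (c • x) = c • φ x
  map_gr : ∀ {i : ℤ} {x : A}, x ∈ 𝒜.gr i → φ x ∈ 𝒜.gr i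
  map_d : ∀ x : A, φ (𝒜.d x) = 𝒜.d (φ x)

/-- A left DG module over a connected cochain DG algebra `𝒜`. -/
structure DGMod (𝒜 : ConnCDGA k A) (M : Type w) [AddCommGroup M] [Module k M] where
  smul : A → M → M
  smul_add : ∀ (a : A) (m n : M), smul a (m + n) = smul a m + smul a n
  add_smul : ∀ (a b : A) (m : M), smul (a + b) m = smul a m + smul b m
  mul_smul : ∀ (a b : A) (m : M), smul (a * b) m = smul a (smul b m)
  one_smul : ∀ m : M, smul 1 m = m
  ksmul_left : ∀ (c : k) (a : A) (m : M), smul (c • a) m = c • smul a m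
  ksmul_right : ∀ (c : k) (a : A) (m : M), smul a (c • m) = c • smul a m
  gr : ℤ → Submodule k M
  decomp : DirectSum.Decomposition gr
  smul_mem : ∀ {i j : ℤ} {a : A} {m : M}, a ∈ 𝒜.gr i → m ∈ gr j → smul a m ∈ gr (i + j)
  d : M →ₗ[k] M
  d_mem : ∀ {i : ℤ} {m : M}, m ∈ gr i → d m ∈ gr (i + 1)
  d_sq : ∀ m : M, d (d m) = 0
  leibniz : ∀ {i : ℤ} {a : A} (m : M), a ∈ 𝒜.gr i →
    d (smul a m) = smul (𝒜.d a) m + ((-1 : k) ^ i) • smul a (d m)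

/-- A right DG module over a connected cochain DG algebra `𝒜`
(equivalently, a left DG module over the opposite DG algebra `𝒜ᵒᵖ`). -/
structure DGRMod (𝒜 : ConnCDGA k A) (M : Type w) [AddCommGroup M] [Module k M] where
  rsmul : M → A → M
  rsmul_add : ∀ (a : A) (m n : M), rsmul (m + n) a = rsmul m a + rsmul n a
  add_rsmul : ∀ (a b : A) (m : M), rsmul m (a + b) = rsmul m a + rsmul m b
  mul_rsmul : ∀ (a b : A) (m : M), rsmul m (a * b) = rsmul (rsmul m a) b
  one_rsmul : ∀ m : M, rsmul m 1 = m
  krsmul_left : ∀ (c : k) (a : A) (m : M), rsmul (c • m) a = c • rsmul m a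
  krsmul_right : ∀ (c : k) (a : A) (m : M), rsmul m (c • a) = c • rsmul m a
  gr : ℤ → Submodule k M
  decomp : DirectSum.Decomposition gr
  rsmul_mem : ∀ {i j : ℤ} {m : M} {a : A}, m ∈ gr i → a ∈ 𝒜.gr j → rsmul m a ∈ gr (i + j)
  d : M →ₗ[k] M
  d_mem : ∀ {i : ℤ} {m : M}, m ∈ gr i → d m ∈ gr (i + 1)
  d_sq : ∀ m : M, d (d m) = 0
  leibniz : ∀ {i : ℤ} {m : M} (a : A), m ∈ gr i →
    d (rsmul m a) = rsmul (d m) a + ((-1 : k) ^ i) • rsmul m (𝒜.d a)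

/-- A DG bimodule over a connected cochain DG algebra `𝒜`
(equivalently, a DG module over the enveloping DG algebra `𝒜ᵉ = 𝒜 ⊗ 𝒜ᵒᵖ`). -/
structure DGBimod (𝒜 : ConnCDGA k A) (M : Type w) [AddCommGroup M] [Module k M]
    extends DGMod 𝒜 M where
  rsmul : M → A → M
  rsmul_add : ∀ (a : A) (m n : M), rsmul (m + n) a = rsmul m a + rsmul n a
  add_rsmul : ∀ (a b : A) (m : M), rsmul m (a + b) = rsmul m a + rsmul m b
  mul_rsmul : ∀ (a b : A) (m : M), rsmul m (a * b) = rsmul (rsmul m a) b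
  one_rsmul : ∀ m : M, rsmul m 1 = m
  krsmul_left : ∀ (c : k) (a : A) (m : M), rsmul (c • m) a = c • rsmul m a
  krsmul_right : ∀ (c : k) (a : A) (m : M), rsmul m (c • a) = c • rsmul m a
  rsmul_mem : ∀ {i j : ℤ} {m : M} {a : A}, m ∈ gr i → a ∈ 𝒜.gr j → rsmul m a ∈ gr (i + j)
  rleibniz : ∀ {i : ℤ} {m : M} (a : A), m ∈ gr i →
    d (rsmul m a) = rsmul (d m) a + ((-1 : k) ^ i) • rsmul m (𝒜.d a)
  smul_rsmul_assoc : ∀ (a : A) (m : M) (b : A), rsmul (smul a m) b = smul a (rsmul m b)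

/-- The underlying right DG module of a DG bimodule. -/
def DGBimod.toDGRMod {𝒜 : ConnCDGA k A} {M : Type w} [AddCommGroup M] [Module k M]
    (ℳ : DGBimod 𝒜 M) : DGRMod 𝒜 M where
  rsmul := ℳ.rsmul
  rsmul_add := ℳ.rsmul_add
  add_rsmul := ℳ.add_rsmul
  mul_rsmul := ℳ.mul_rsmul
  one_rsmul := ℳ.one_rsmul
  krsmul_left := ℳ.krsmul_left
  krsmul_right := ℳ.krsmul_right
  gr := ℳ.gr
  decomp := ℳ.decomp
  rsmul_mem := ℳ.rsmul_mem
  d := ℳ.d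
  d_mem := ℳ.d_mem
  d_sq := ℳ.d_sq
  leibniz := ℳ.rleibniz

/-- The torsion DG submodule `Γ_𝔪(M) = {m ∈ M ∣ A^{≥n} m = 0 for some n ≥ 1}`. -/
def DGMod.torsion {𝒜 : ConnCDGA k A} {M : Type w} [AddCommGroup M] [Module k M]
    (ℳ : DGMod 𝒜 M) : Set M :=
  {m : M | ∃ n : ℤ, 1 ≤ n ∧ ∀ a ∈ (⨆ (i : ℤ) (_ : n ≤ i), 𝒜.gr i), ℳ.smul a m = 0}

/-- `M` is acyclic, i.e. `H(M) = 0`. -/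
def DGMod.IsAcyclic {𝒜 : ConnCDGA k A} {M : Type w} [AddCommGroup M] [Module k M]
    (ℳ : DGMod 𝒜 M) : Prop :=
  ∀ m : M, ℳ.d m = 0 → ∃ x : M, ℳ.d x = m

/-- `M` is acyclic, i.e. `H(M) = 0` (right module version). -/
def DGRMod.IsAcyclic {𝒜 : ConnCDGA k A} {M : Type w} [AddCommGroup M] [Module k M]
    (ℳ : DGRMod 𝒜 M) : Prop :=
  ∀ m : M, ℳ.d m = 0 → ∃ x : M, ℳ.d x = m

/-- A morphism of left DG modules: a degree-0 `A`-linear chain map. -/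
structure DGHom {𝒜 : ConnCDGA k A} {M : Type w} {N : Type w}
    [AddCommGroup M] [Module k M] [AddCommGroup N] [Module k N]
    (ℳ : DGMod 𝒜 M) (𝒩 : DGMod 𝒜 N) where
  toFun : M → N
  map_add : ∀ x y : M, toFun (x + y) = toFun x + toFun y
  map_ksmul : ∀ (c : k) (x : M), toFun (c • x) = c • toFun x
  map_smul : ∀ (a : A) (x : M), toFun (ℳ.smul a x) = 𝒩.smul a (toFun x)
  map_gr : ∀ {i : ℤ} {x : M}, x ∈ ℳ.gr i → toFun x ∈ 𝒩.gr i
  map_d : ∀ x : M, toFun (ℳ.d x) = 𝒩.d (toFun x)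

/-- A homogeneous degree-`i` element of the Hom-complex `Hom_A(M, N)` of left DG modules:
an `A`-linear map of degree `i` (with Koszul sign rule `f(am) = (-1)^{i|a|} a f(m)`). -/
structure HomDeg {𝒜 : ConnCDGA k A} {M : Type w} {N : Type w}
    [AddCommGroup M] [Module k M] [AddCommGroup N] [Module k N]
    (ℳ : DGMod 𝒜 M) (𝒩 : DGMod 𝒜 N) (i : ℤ) where
  toFun : M → N
  map_add : ∀ x y : M, toFun (x + y) = toFun x + toFun y
  map_ksmul : ∀ (c : k) (x : M), toFun (c • x) = c • toFun x
  map_gr : ∀ {j : ℤ} {x : M}, x ∈ ℳ.gr j → toFun x ∈ 𝒩.gr (j + i)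
  map_smul : ∀ {j : ℤ} {a : A} (x : M), a ∈ 𝒜.gr j →
    toFun (ℳ.smul a x) = ((-1 : k) ^ (i * j)) • 𝒩.smul a (toFun x)

/-- A homogeneous degree-`i` element of the Hom-complex `Hom_{Aᵒᵖ}(M, N)` of right DG modules. -/
structure RHomDeg {𝒜 : ConnCDGA k A} {M : Type w} {N : Type w}
    [AddCommGroup M] [Module k M] [AddCommGroup N] [Module k N]
    (ℳ : DGRMod 𝒜 M) (𝒩 : DGRMod 𝒜 N) (i : ℤ) where
  toFun : M → N
  map_add : ∀ x y : M, toFun (x + y) = toFun x + toFun y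
  map_ksmul : ∀ (c : k) (x : M), toFun (c • x) = c • toFun x
  map_gr : ∀ {j : ℤ} {x : M}, x ∈ ℳ.gr j → toFun x ∈ 𝒩.gr (j + i)
  map_rsmul : ∀ (x : M) (a : A), toFun (ℳ.rsmul x a) = 𝒩.rsmul (toFun x) a

/-- A homogeneous degree-`i` element of the Hom-complex `Hom_{Aᵉ}(M, N)` of DG bimodules. -/
structure BiHomDeg {𝒜 : ConnCDGA k A} {M : Type w} {N : Type w}
    [AddCommGroup M] [Module k M] [AddCommGroup N] [Module k N]
    (ℳ : DGBimod 𝒜 M) (𝒩 : DGBimod 𝒜 N) (i : ℤ)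
    extends HomDeg ℳ.toDGMod 𝒩.toDGMod i where
  map_rsmul : ∀ (x : M) (a : A), toFun (ℳ.rsmul x a) = 𝒩.rsmul (toFun x) a

/-- The Hom-complex `Hom_A(M,N)` of left DG modules is acyclic:
every homogeneous cocycle is a coboundary (differential `∂f = ∂_N ∘ f - (-1)^{|f|} f ∘ ∂_M`). -/
def HomAcyclic {𝒜 : ConnCDGA k A} {M : Type w} {N : Type w}
    [AddCommGroup M] [Module k M] [AddCommGroup N] [Module k N]
    (ℳ : DGMod 𝒜 M) (𝒩 : DGMod 𝒜 N) : Prop :=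
  ∀ (i : ℤ) (f : HomDeg ℳ 𝒩 i),
    (∀ x : M, 𝒩.d (f.toFun x) = ((-1 : k) ^ i) • f.toFun (ℳ.d x)) →
    ∃ g : HomDeg ℳ 𝒩 (i - 1),
      ∀ x : M, f.toFun x = 𝒩.d (g.toFun x) - ((-1 : k) ^ (i - 1)) • g.toFun (ℳ.d x)

/-- The Hom-complex of right DG modules is acyclic. -/
def RHomAcyclic {𝒜 : ConnCDGA k A} {M : Type w} {N : Type w}
    [AddCommGroup M] [Module k M] [AddCommGroup N] [Module k N]
    (ℳ : DGRMod 𝒜 M) (𝒩 : DGRMod 𝒜 N) : Prop :=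
  ∀ (i : ℤ) (f : RHomDeg ℳ 𝒩 i),
    (∀ x : M, 𝒩.d (f.toFun x) = ((-1 : k) ^ i) • f.toFun (ℳ.d x)) →
    ∃ g : RHomDeg ℳ 𝒩 (i - 1),
      ∀ x : M, f.toFun x = 𝒩.d (g.toFun x) - ((-1 : k) ^ (i - 1)) • g.toFun (ℳ.d x)

/-- The Hom-complex of DG bimodules is acyclic. -/
def BiHomAcyclic {𝒜 : ConnCDGA k A} {M : Type w} {N : Type w}
    [AddCommGroup M] [Module k M] [AddCommGroup N] [Module k N]
    (ℳ : DGBimod 𝒜 M) (𝒩 : DGBimod 𝒜 N) : Prop :=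
  ∀ (i : ℤ) (f : BiHomDeg ℳ 𝒩 i),
    (∀ x : M, 𝒩.d (f.toFun x) = ((-1 : k) ^ i) • f.toFun (ℳ.d x)) →
    ∃ g : BiHomDeg ℳ 𝒩 (i - 1),
      ∀ x : M, f.toFun x = 𝒩.d (g.toFun x) - ((-1 : k) ^ (i - 1)) • g.toFun (ℳ.d x)

/-- A DG module over the tensor product DG algebra `𝒜 ⊗ ℬ`, modelled as a complex with
commuting (up to Koszul sign) left `𝒜`- and left `ℬ`- DG module structures. -/
structure DGBiActMod (𝒜 : ConnCDGA k A) (ℬ : ConnCDGA k B) (M : Type w)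
    [AddCommGroup M] [Module k M] extends DGMod 𝒜 M where
  bsmul : B → M → M
  bsmul_add : ∀ (b : B) (m n : M), bsmul b (m + n) = bsmul b m + bsmul b n
  add_bsmul : ∀ (b c : B) (m : M), bsmul (b + c) m = bsmul b m + bsmul c m
  mul_bsmul : ∀ (b c : B) (m : M), bsmul (b * c) m = bsmul b (bsmul c m)
  one_bsmul : ∀ m : M, bsmul 1 m = m
  kbsmul_left : ∀ (c : k) (b : B) (m : M), bsmul (c • b) m = c • bsmul b m
  kbsmul_right : ∀ (c : k) (b : B) (m : M), bsmul b (c • m) = c • bsmul b m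
  bsmul_mem : ∀ {i j : ℤ} {b : B} {m : M}, b ∈ ℬ.gr i → m ∈ gr j → bsmul b m ∈ gr (i + j)
  bleibniz : ∀ {i : ℤ} {b : B} (m : M), b ∈ ℬ.gr i →
    d (bsmul b m) = bsmul (ℬ.d b) m + ((-1 : k) ^ i) • bsmul b (d m)
  ab_compat : ∀ {i j : ℤ} {a : A} {b : B} (m : M), a ∈ 𝒜.gr i → b ∈ ℬ.gr j →
    smul a (bsmul b m) = ((-1 : k) ^ (i * j)) • bsmul b (smul a m)

/-- A homogeneous degree-`i` element of the Hom-complex `Hom_{A⊗B}(M, N)`. -/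
structure ABHomDeg {𝒜 : ConnCDGA k A} {ℬ : ConnCDGA k B} {M : Type w} {N : Type w}
    [AddCommGroup M] [Module k M] [AddCommGroup N] [Module k N]
    (ℳ : DGBiActMod 𝒜 ℬ M) (𝒩 : DGBiActMod 𝒜 ℬ N) (i : ℤ)
    extends HomDeg ℳ.toDGMod 𝒩.toDGMod i where
  map_bsmul : ∀ {j : ℤ} {b : B} (x : M), b ∈ ℬ.gr j →
    toFun (ℳ.bsmul b x) = ((-1 : k) ^ (i * j)) • 𝒩.bsmul b (toFun x)

/-- The Hom-complex `Hom_{A⊗B}(M, N)` is acyclic. -/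
def ABHomAcyclic {𝒜 : ConnCDGA k A} {ℬ : ConnCDGA k B} {M : Type w} {N : Type w}
    [AddCommGroup M] [Module k M] [AddCommGroup N] [Module k N]
    (ℳ : DGBiActMod 𝒜 ℬ M) (𝒩 : DGBiActMod 𝒜 ℬ N) : Prop :=
  ∀ (i : ℤ) (f : ABHomDeg ℳ 𝒩 i),
    (∀ x : M, 𝒩.d (f.toFun x) = ((-1 : k) ^ i) • f.toFun (ℳ.d x)) →
    ∃ g : ABHomDeg ℳ 𝒩 (i - 1),
      ∀ x : M, f.toFun x = 𝒩.d (g.toFun x) - ((-1 : k) ^ (i - 1)) • g.toFun (ℳ.d x)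

/-- A homogeneous degree-`i` element of the Hom-complex `Hom_A(P, Hom_B(Q, E))`,
where `E` is a DG `A⊗B`-module, encoded as a two-variable function. -/
structure HomHomDeg {𝒜 : ConnCDGA k A} {ℬ : ConnCDGA k B}
    {P : Type w} {Q : Type w} {E : Type w}
    [AddCommGroup P] [Module k P] [AddCommGroup Q] [Module k Q]
    [AddCommGroup E] [Module k E]
    (MP : DGMod 𝒜 P) (MQ : DGMod ℬ Q) (ME : DGBiActMod 𝒜 ℬ E) (i : ℤ) where
  toFun : P → Q → E
  map_add₁ : ∀ (x y : P) (q : Q), toFun (x + y) q = toFun x q + toFun y q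
  map_ksmul₁ : ∀ (c : k) (x : P) (q : Q), toFun (c • x) q = c • toFun x q
  map_add₂ : ∀ (x : P) (q r : Q), toFun x (q + r) = toFun x q + toFun x r
  map_ksmul₂ : ∀ (c : k) (x : P) (q : Q), toFun x (c • q) = c • toFun x q
  map_gr : ∀ {j l : ℤ} {x : P} {q : Q}, x ∈ MP.gr j → q ∈ MQ.gr l →
    toFun x q ∈ ME.gr (i + j + l)
  map_bsmul : ∀ {j m : ℤ} {x : P} {b : B} (q : Q), x ∈ MP.gr j → b ∈ ℬ.gr m →
    toFun x (MQ.smul b q) = ((-1 : k) ^ ((i + j) * m)) • ME.bsmul b (toFun x q)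
  map_asmul : ∀ {m : ℤ} {a : A} (x : P) (q : Q), a ∈ 𝒜.gr m →
    toFun (MP.smul a x) q = ((-1 : k) ^ (i * m)) • ME.smul a (toFun x q)

/-- A DG pairing `θ : X × Y → A` between a DG `A`-bimodule `X` and a DG `A`-bimodule `Y`:
`A`-balanced, left and right `A`-linear, graded and compatible with the differentials.
Such a map induces a morphism of DG `A`-bimodules `X ⊗_A Y → A`. -/
structure IsDGPairing {𝒜 : ConnCDGA k A} {X : Type w} {Y : Type w}
    [AddCommGroup X] [Module k X] [AddCommGroup Y] [Module k Y]
    (𝕏 : DGBimod 𝒜 X) (𝕐 : DGBimod 𝒜 Y) (θ : X →ₗ[k] Y →ₗ[k] A) : Prop where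
  balanced : ∀ (a : A) (x : X) (y : Y), θ (𝕏.rsmul x a) y = θ x (𝕐.smul a y)
  left_lin : ∀ (a : A) (x : X) (y : Y), θ (𝕏.smul a x) y = a * θ x y
  right_lin : ∀ (a : A) (x : X) (y : Y), θ x (𝕐.rsmul y a) = θ x y * a
  graded : ∀ {i j : ℤ} {x : X} {y : Y}, x ∈ 𝕏.gr i → y ∈ 𝕐.gr j → θ x y ∈ 𝒜.gr (i + j)
  chain : ∀ {i : ℤ} {x : X} (y : Y), x ∈ 𝕏.gr i →
    𝒜.d (θ x y) = θ (𝕏.d x) y + ((-1 : k) ^ i) • θ x (𝕐.d y)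

/-- The `k`-subspace of `X ⊗_k Y` spanned by the elements `xa ⊗ y - x ⊗ ay`;
quotienting by it yields `X ⊗_A Y`. -/
def balancedRel {𝒜 : ConnCDGA k A} {X : Type w} {Y : Type w}
    [AddCommGroup X] [Module k X] [AddCommGroup Y] [Module k Y]
    (𝕏 : DGBimod 𝒜 X) (𝕐 : DGBimod 𝒜 Y) : Submodule k (TensorProduct k X Y) :=
  Submodule.span k {z | ∃ (a : A) (x : X) (y : Y),
    z = (𝕏.rsmul x a) ⊗ₜ[k] y - x ⊗ₜ[k] (𝕐.smul a y)}

/-- `G : A → L` is an isomorphism of DG `A`-bimodules `Σⁱ A(φ) → L`, where `Σⁱ A(φ)`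
is the shift of `A` by `i` twisted on the right by the DG automorphism `φ`
(free on a generator `e = 1` in degree `-i`, right action `e·a = (-1)^{i|a|} φ(a) e`). -/
def IsShiftTwistIso {𝒜 : ConnCDGA k A} {L : Type w} [AddCommGroup L] [Module k L]
    (𝕃 : DGBimod 𝒜 L) (i : ℤ) (φ : A → A) (G : A → L) : Prop :=
  Function.Bijective G ∧
  (∀ x y : A, G (x + y) = G x + G y) ∧
  (∀ (c : k) (x : A), G (c • x) = c • G x) ∧
  (∀ (j : ℤ) (a : A), a ∈ 𝒜.gr j ↔ G a ∈ 𝕃.gr (j - i)) ∧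
  (∀ a : A, G (𝒜.d a) = 𝕃.d (G a)) ∧
  (∀ a x : A, G (a * x) = 𝕃.smul a (G x)) ∧
  (∀ (j : ℤ) (x a : A), a ∈ 𝒜.gr j →
    𝕃.rsmul (G x) a = ((-1 : k) ^ (i * j)) • G (x * φ a))

/-- The `k`-subspace of `X ⊗_k F` (X a right DG module, F a left DG module) spanned by
the elements `xa ⊗ u - x ⊗ au`; quotienting by it yields `X ⊗_A F`. -/
def balRL {𝒜 : ConnCDGA k A} {X : Type w} {F : Type w}
    [AddCommGroup X] [Module k X] [AddCommGroup F] [Module k F]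
    (𝒳 : DGRMod 𝒜 X) (ℱ : DGMod 𝒜 F) : Submodule k (TensorProduct k X F) :=
  Submodule.span k {z | ∃ (a : A) (x : X) (u : F),
    z = (𝒳.rsmul x a) ⊗ₜ[k] u - x ⊗ₜ[k] (ℱ.smul a u)}

/-- The tensor product `X ⊗_A F` of a right DG module with a left DG module. -/
abbrev TensRL {𝒜 : ConnCDGA k A} {X : Type w} {F : Type w}
    [AddCommGroup X] [Module k X] [AddCommGroup F] [Module k F]
    (𝒳 : DGRMod 𝒜 X) (ℱ : DGMod 𝒜 F) :=
  TensorProduct k X F ⧸ balRL 𝒳 ℱ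

/-- The degree-`m` graded piece of `X ⊗_A F`. -/
def tgrRL {𝒜 : ConnCDGA k A} {X : Type w} {F : Type w}
    [AddCommGroup X] [Module k X] [AddCommGroup F] [Module k F]
    (𝒳 : DGRMod 𝒜 X) (ℱ : DGMod 𝒜 F) (m : ℤ) : Submodule k (TensRL 𝒳 ℱ) :=
  Submodule.span k {t | ∃ (p q : ℤ) (x : X) (u : F), x ∈ 𝒳.gr p ∧ u ∈ ℱ.gr q ∧
    p + q = m ∧ t = Submodule.Quotient.mk (x ⊗ₜ[k] u)}

/-- A homogeneous degree-`n` element of the Matlis dual complex `(X ⊗_A F)'`: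
a `k`-linear functional on `X ⊗_A F` supported on the graded piece of degree `-n`. -/
structure DualDegRL {𝒜 : ConnCDGA k A} {X : Type w} {F : Type w}
    [AddCommGroup X] [Module k X] [AddCommGroup F] [Module k F]
    (𝒳 : DGRMod 𝒜 X) (ℱ : DGMod 𝒜 F) (n : ℤ) where
  toFun : TensRL 𝒳 ℱ → k
  map_add : ∀ s t : TensRL 𝒳 ℱ, toFun (s + t) = toFun s + toFun t
  map_ksmul : ∀ (c : k) (t : TensRL 𝒳 ℱ), toFun (c • t) = c * toFun t
  supp : ∀ (m : ℤ), m ≠ -n → ∀ t ∈ tgrRL 𝒳 ℱ m, toFun t = 0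

/-- A homogeneous degree-`n` element of the Hom-complex `Hom_A(F, X')`, where `X'`
is the Matlis dual of the right DG module `X`, viewed as a left DG module via
`(a·f)(x) = (-1)^{|a||f|} f(xa)`; encoded as a two-variable function `F → X → k`. -/
structure HomToDualDeg {𝒜 : ConnCDGA k A} {X : Type w} {F : Type w}
    [AddCommGroup X] [Module k X] [AddCommGroup F] [Module k F]
    (𝒳 : DGRMod 𝒜 X) (ℱ : DGMod 𝒜 F) (n : ℤ) where
  toFun : F → X → k
  map_add₁ : ∀ (u v : F) (x : X), toFun (u + v) x = toFun u x + toFun v x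
  map_ksmul₁ : ∀ (c : k) (u : F) (x : X), toFun (c • u) x = c * toFun u x
  map_add₂ : ∀ (u : F) (x y : X), toFun u (x + y) = toFun u x + toFun u y
  map_ksmul₂ : ∀ (c : k) (u : F) (x : X), toFun u (c • x) = c * toFun u x
  supp : ∀ {q j : ℤ} {u : F} {x : X}, u ∈ ℱ.gr q → x ∈ 𝒳.gr j → j ≠ -(n + q) →
    toFun u x = 0
  map_smul : ∀ {m q : ℤ} {a : A} {u : F} (x : X), a ∈ 𝒜.gr m → u ∈ ℱ.gr q →
    toFun (ℱ.smul a u) x = ((-1 : k) ^ (m * q)) * toFun u (𝒳.rsmul x a)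

/-!
Since `A = k ⊕ k x̄`, a DG bimodule freely generated by a central element `u` is identified
with `A` through the coordinate `x = coord(x) · u`, and `x ⊗ y ↦ coord(x) coord(y)` identifies
`L ⊗_A L^∨` and `L^∨ ⊗_A L` with `A`. It is a chain map because `∂e = x̄e` and `∂f = -x̄f`
contribute cancelling terms, using `(-1)^{|a|} a x̄ = a x̄` for homogeneous `a`. In contrast,
`Σⁱ A(φ)` has zero differential, like `A`, while `∂e = x̄e ≠ 0`.
-/

namespace ConnCDGA

variable (𝒜 : ConnCDGA k A) {xb : A}

theorem exists_eq_smul_one_add_smul (hspan : 𝒜.gr 1 = Submodule.span k {xb})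
    (hhigh : ∀ i : ℤ, i ≠ 0 → i ≠ 1 → 𝒜.gr i = ⊥) (a : A) :
    ∃ c₁ c₂ : k, a = c₁ • (1 : A) + c₂ • xb := by
  let := 𝒜.decomp
  have hle : (⨆ i, 𝒜.gr i) ≤ 𝒜.gr 0 ⊔ 𝒜.gr 1 := by
    refine iSup_le fun i => ?_
    rcases eq_or_ne i 0 with rfl | h0
    · exact le_sup_left
    rcases eq_or_ne i 1 with rfl | h1
    · exact le_sup_right
    · rw [hhigh i h0 h1]
      exact bot_le
  have ha : a ∈ 𝒜.gr 0 ⊔ 𝒜.gr 1 :=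
    hle ((DirectSum.Decomposition.isInternal 𝒜.gr).submodule_iSup_eq_top ▸ Submodule.mem_top)
  obtain ⟨y, hy, z, hz, rfl⟩ := Submodule.mem_sup.1 ha
  rw [𝒜.deg_zero] at hy
  rw [hspan] at hz
  obtain ⟨c₁, rfl⟩ := Submodule.mem_span_singleton.1 hy
  obtain ⟨c₂, rfl⟩ := Submodule.mem_span_singleton.1 hz
  exact ⟨c₁, c₂, rfl⟩

theorem commute_of_gr_one_eq_span (hspan : 𝒜.gr 1 = Submodule.span k {xb})
    (hhigh : ∀ i : ℤ, i ≠ 0 → i ≠ 1 → 𝒜.gr i = ⊥) (a : A) : Commute xb a := by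
  obtain ⟨c₁, c₂, rfl⟩ := 𝒜.exists_eq_smul_one_add_smul hspan hhigh a
  exact ((Commute.one_right xb).smul_right c₁).add_right ((Commute.refl xb).smul_right c₂)

theorem neg_one_zpow_smul_mul_eq (hspan : 𝒜.gr 1 = Submodule.span k {xb})
    (hhigh : ∀ i : ℤ, i ≠ 0 → i ≠ 1 → 𝒜.gr i = ⊥) (hxsq : xb * xb = 0)
    {i : ℤ} {a : A} (ha : a ∈ 𝒜.gr i) : (-1 : k) ^ i • (a * xb) = a * xb := by
  rcases eq_or_ne i 0 with rfl | h0
  · rw [zpow_zero, one_smul]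
  rcases eq_or_ne i 1 with rfl | h1
  · rw [hspan] at ha
    obtain ⟨c, rfl⟩ := Submodule.mem_span_singleton.1 ha
    rw [smul_mul_assoc, hxsq, smul_zero, smul_zero]
  · rw [hhigh i h0 h1, Submodule.mem_bot] at ha
    rw [ha, zero_mul, smul_zero]

end ConnCDGA

namespace DGMod

variable {𝒜 : ConnCDGA k A} {M : Type w} [AddCommGroup M] [Module k M] (ℳ : DGMod 𝒜 M)

def toSpanSingleton (u : M) : A →ₗ[k] M where
  toFun a := ℳ.smul a u
  map_add' a b := ℳ.add_smul a b u
  map_smul' c a := ℳ.ksmul_left c a u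

theorem zero_smul (x : M) : ℳ.smul 0 x = 0 :=
  (ℳ.toSpanSingleton x).map_zero

variable {u : M} (hu : Function.Bijective (ℳ.toSpanSingleton u))

noncomputable def coord : M ≃ₗ[k] A :=
  (LinearEquiv.ofBijective _ hu).symm

theorem smul_coord (x : M) : ℳ.smul (ℳ.coord hu x) u = x :=
  (LinearEquiv.ofBijective _ hu).apply_symm_apply x

theorem coord_smul_gen (a : A) : ℳ.coord hu (ℳ.smul a u) = a :=
  (LinearEquiv.ofBijective _ hu).symm_apply_apply a

theorem coord_gen : ℳ.coord hu u = 1 := by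
  simpa only [ℳ.one_smul] using ℳ.coord_smul_gen hu 1

theorem coord_smul (a : A) (x : M) : ℳ.coord hu (ℳ.smul a x) = a * ℳ.coord hu x := by
  conv_lhs => rw [← ℳ.smul_coord hu x, ← ℳ.mul_smul, coord_smul_gen]

theorem mem_gr_iff_coord_mem (hgr : ∀ (j : ℤ) (a : A), a ∈ 𝒜.gr j ↔ ℳ.smul a u ∈ ℳ.gr j)
    (i : ℤ) (x : M) : x ∈ ℳ.gr i ↔ ℳ.coord hu x ∈ 𝒜.gr i := by
  rw [hgr, smul_coord]

theorem coord_d {xb : A} (hspan : 𝒜.gr 1 = Submodule.span k {xb})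
    (hhigh : ∀ i : ℤ, i ≠ 0 → i ≠ 1 → 𝒜.gr i = ⊥) (hxsq : xb * xb = 0) (hx1 : xb ∈ 𝒜.gr 1)
    (hd0 : ∀ a : A, 𝒜.d a = 0) {c : k} (hdu : ℳ.d u = c • ℳ.smul xb u) (x : M) :
    ℳ.coord hu (ℳ.d x) = c • (ℳ.coord hu x * xb) := by
  have hhom : ∀ {i : ℤ} {a : A}, a ∈ 𝒜.gr i → ℳ.d (ℳ.smul a u) = ℳ.smul (c • (a * xb)) u := by
    intro i a ha
    rw [ℳ.leibniz u ha, hd0, ℳ.zero_smul, zero_add, hdu, ℳ.ksmul_right,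
      ← ℳ.mul_smul, ← ℳ.ksmul_left, ← ℳ.ksmul_left, smul_comm,
      𝒜.neg_one_zpow_smul_mul_eq hspan hhigh hxsq ha]
  obtain ⟨c₁, c₂, hx⟩ := 𝒜.exists_eq_smul_one_add_smul hspan hhigh (ℳ.coord hu x)
  conv_lhs => rw [← ℳ.smul_coord hu x, hx]
  rw [ℳ.add_smul, ℳ.ksmul_left, ℳ.ksmul_left, map_add, map_smul, map_smul, hhom 𝒜.one_mem,
    hhom hx1, ← ℳ.ksmul_left, ← ℳ.ksmul_left, ← ℳ.add_smul, coord_smul_gen, hx]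
  simp only [one_mul, smul_mul_assoc, hxsq, smul_zero, add_zero, add_mul]
  exact smul_comm _ _ _

end DGMod

theorem balancedRel_le_ker_lift {𝒜 : ConnCDGA k A} {X Y : Type w}
    [AddCommGroup X] [Module k X] [AddCommGroup Y] [Module k Y]
    {𝕏 : DGBimod 𝒜 X} {𝕐 : DGBimod 𝒜 Y} {θ : X →ₗ[k] Y →ₗ[k] A}
    (hθ : ∀ (a : A) (x : X) (y : Y), θ (𝕏.rsmul x a) y = θ x (𝕐.smul a y)) :
    balancedRel 𝕏 𝕐 ≤ LinearMap.ker (TensorProduct.lift θ) := by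
  rw [balancedRel, Submodule.span_le]
  rintro _ ⟨a, x, y, rfl⟩
  rw [SetLike.mem_coe, LinearMap.mem_ker, map_sub, lift.tmul, lift.tmul, hθ, sub_self]

namespace DGBimod

variable {𝒜 : ConnCDGA k A} {M : Type w} [AddCommGroup M] [Module k M]
  {M' : Type w} [AddCommGroup M'] [Module k M']

theorem rsmul_gen_eq_smul (𝕄 : DGBimod 𝒜 M) {xb : A} (hspan : 𝒜.gr 1 = Submodule.span k {xb})
    (hhigh : ∀ i : ℤ, i ≠ 0 → i ≠ 1 → 𝒜.gr i = ⊥) {u : M}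
    (hucomm : 𝕄.rsmul u xb = 𝕄.smul xb u) (a : A) : 𝕄.rsmul u a = 𝕄.smul a u := by
  obtain ⟨c₁, c₂, rfl⟩ := 𝒜.exists_eq_smul_one_add_smul hspan hhigh a
  rw [𝕄.add_rsmul, 𝕄.krsmul_right, 𝕄.krsmul_right, 𝕄.one_rsmul, hucomm, 𝕄.add_smul,
    𝕄.ksmul_left, 𝕄.ksmul_left, 𝕄.one_smul]

variable {𝕄 : DGBimod 𝒜 M} {u : M} (hu : Function.Bijective (𝕄.toSpanSingleton u))
  {𝕄' : DGBimod 𝒜 M'} {u' : M'} (hu' : Function.Bijective (𝕄'.toSpanSingleton u'))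

theorem coord_rsmul (hcentral : ∀ a, 𝕄.rsmul u a = 𝕄.smul a u) (x : M) (a : A) :
    𝕄.coord hu (𝕄.rsmul x a) = 𝕄.coord hu x * a := by
  conv_lhs => rw [← 𝕄.smul_coord hu x, 𝕄.smul_rsmul_assoc, hcentral, ← 𝕄.mul_smul,
    DGMod.coord_smul_gen]

noncomputable def coordPairing : M →ₗ[k] M' →ₗ[k] A :=
  (LinearMap.mul k A).compl₁₂ (𝕄.coord hu).toLinearMap (𝕄'.coord hu').toLinearMap

theorem coordPairing_apply (x : M) (y : M') :
    coordPairing hu hu' x y = 𝕄.coord hu x * 𝕄'.coord hu' y :=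
  rfl

theorem isDGPairing_coordPairing {xb : A} (hspan : 𝒜.gr 1 = Submodule.span k {xb})
    (hhigh : ∀ i : ℤ, i ≠ 0 → i ≠ 1 → 𝒜.gr i = ⊥) (hxsq : xb * xb = 0)
    (hd0 : ∀ a : A, 𝒜.d a = 0)
    (hgr : ∀ (j : ℤ) (a : A), a ∈ 𝒜.gr j ↔ 𝕄.smul a u ∈ 𝕄.gr j)
    (hgr' : ∀ (j : ℤ) (a : A), a ∈ 𝒜.gr j ↔ 𝕄'.smul a u' ∈ 𝕄'.gr j)
    (hcentral : ∀ a, 𝕄.rsmul u a = 𝕄.smul a u) (hcentral' : ∀ a, 𝕄'.rsmul u' a = 𝕄'.smul a u')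
    {c c' : k} (hd : ∀ x, 𝕄.coord hu (𝕄.d x) = c • (𝕄.coord hu x * xb))
    (hd' : ∀ y, 𝕄'.coord hu' (𝕄'.d y) = c' • (𝕄'.coord hu' y * xb)) (hc : c + c' = 0) :
    IsDGPairing 𝕄 𝕄' (coordPairing hu hu') where
  balanced a x y := by
    simp only [coordPairing_apply, coord_rsmul hu hcentral, DGMod.coord_smul, mul_assoc]
  left_lin a x y := by
    simp only [coordPairing_apply, DGMod.coord_smul, mul_assoc]
  right_lin a x y := by
    simp only [coordPairing_apply, coord_rsmul hu' hcentral', mul_assoc]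
  graded hx hy := 𝒜.mul_mem ((DGMod.mem_gr_iff_coord_mem _ hu hgr _ _).1 hx)
    ((DGMod.mem_gr_iff_coord_mem _ hu' hgr' _ _).1 hy)
  chain {i x} y hx := by
    have hsign := 𝒜.neg_one_zpow_smul_mul_eq hspan hhigh hxsq
      ((DGMod.mem_gr_iff_coord_mem _ hu hgr i x).1 hx)
    -- `x̄` is central, so both terms are multiples of `coord x * x̄ * coord y`
    rw [coordPairing_apply, coordPairing_apply, coordPairing_apply, hd0, hd, hd',
      ← (𝒜.commute_of_gr_one_eq_span hspan hhigh (𝕄'.coord hu' y)).eq, mul_smul_comm,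
      ← mul_assoc, smul_comm ((-1 : k) ^ i) c', ← smul_mul_assoc ((-1 : k) ^ i), hsign,
      smul_mul_assoc, ← add_smul, hc, zero_smul]

theorem bijective_liftQ_coordPairing (hcentral : ∀ a, 𝕄.rsmul u a = 𝕄.smul a u)
    (hker : balancedRel 𝕄 𝕄' ≤ LinearMap.ker (TensorProduct.lift (coordPairing hu hu'))) :
    Function.Bijective (Submodule.liftQ _ _ hker) := by
  set θ := TensorProduct.lift (coordPairing hu hu')
  have hrel : ∀ z, z - (𝕄.smul (θ z) u) ⊗ₜ[k] u' ∈ balancedRel 𝕄 𝕄' := by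
    intro z
    induction z using TensorProduct.induction_on with
    | zero => simp only [map_zero, 𝕄.zero_smul, zero_tmul, sub_zero, zero_mem]
    | tmul x y =>
      have hrsmul : 𝕄.rsmul x (𝕄'.coord hu' y) = 𝕄.smul (θ (x ⊗ₜ[k] y)) u := by
        rw [lift.tmul, coordPairing_apply, ← coord_rsmul hu hcentral, DGMod.smul_coord]
      have hgen : 𝕄.rsmul x (𝕄'.coord hu' y) ⊗ₜ[k] u' - x ⊗ₜ[k] 𝕄'.smul (𝕄'.coord hu' y) u' ∈
          balancedRel 𝕄 𝕄' := Submodule.subset_span ⟨_, x, u', rfl⟩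
      rw [hrsmul, DGMod.smul_coord] at hgen
      simpa only [neg_sub] using neg_mem hgen
    | add z₁ z₂ h₁ h₂ =>
      convert add_mem h₁ h₂ using 1
      rw [map_add, 𝕄.add_smul, add_tmul]
      abel
  refine ⟨?_, fun a => ⟨Submodule.Quotient.mk (𝕄.smul a u ⊗ₜ[k] u'), ?_⟩⟩
  · rw [← LinearMap.ker_eq_bot]
    refine Submodule.ker_liftQ_eq_bot _ _ _ fun z hz => ?_
    have h := hrel z
    rwa [show θ z = 0 from hz, 𝕄.zero_smul, zero_tmul, sub_zero] at h
  · rw [Submodule.liftQ_apply, lift.tmul, coordPairing_apply, DGMod.coord_smul_gen,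
      DGMod.coord_gen, mul_one]

end DGBimod

theorem DGBimod.exists_isDGPairing_bijective_liftQ {𝒜 : ConnCDGA k A} {xb : A}
    (hspan : 𝒜.gr 1 = Submodule.span k {xb}) (hhigh : ∀ i : ℤ, i ≠ 0 → i ≠ 1 → 𝒜.gr i = ⊥)
    (hxsq : xb * xb = 0) (hx1 : xb ∈ 𝒜.gr 1) (hd0 : ∀ a : A, 𝒜.d a = 0)
    {M : Type w} [AddCommGroup M] [Module k M] {𝕄 : DGBimod 𝒜 M} {u : M}
    (hu : Function.Bijective (𝕄.toSpanSingleton u))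
    (hgr : ∀ (j : ℤ) (a : A), a ∈ 𝒜.gr j ↔ 𝕄.smul a u ∈ 𝕄.gr j)
    (hucomm : 𝕄.rsmul u xb = 𝕄.smul xb u) {c : k} (hdu : 𝕄.d u = c • 𝕄.smul xb u)
    {M' : Type w} [AddCommGroup M'] [Module k M'] {𝕄' : DGBimod 𝒜 M'} {u' : M'}
    (hu' : Function.Bijective (𝕄'.toSpanSingleton u'))
    (hgr' : ∀ (j : ℤ) (a : A), a ∈ 𝒜.gr j ↔ 𝕄'.smul a u' ∈ 𝕄'.gr j)
    (hucomm' : 𝕄'.rsmul u' xb = 𝕄'.smul xb u') {c' : k} (hdu' : 𝕄'.d u' = c' • 𝕄'.smul xb u')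
    (hc : c + c' = 0) :
    ∃ θ : M →ₗ[k] M' →ₗ[k] A, IsDGPairing 𝕄 𝕄' θ ∧ θ u u' = 1 ∧
      ∃ hker : balancedRel 𝕄 𝕄' ≤ LinearMap.ker (TensorProduct.lift θ),
        Function.Bijective (Submodule.liftQ (balancedRel 𝕄 𝕄') (TensorProduct.lift θ) hker) := by
  have hcentral := 𝕄.rsmul_gen_eq_smul hspan hhigh hucomm
  have hθ := isDGPairing_coordPairing hu hu' hspan hhigh hxsq hd0 hgr hgr' hcentral
    (𝕄'.rsmul_gen_eq_smul hspan hhigh hucomm')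
    (DGMod.coord_d _ hu hspan hhigh hxsq hx1 hd0 hdu)
    (DGMod.coord_d _ hu' hspan hhigh hxsq hx1 hd0 hdu') hc
  have hker := balancedRel_le_ker_lift hθ.balanced
  refine ⟨coordPairing hu hu', hθ, ?_, hker, bijective_liftQ_coordPairing hu hu' hcentral hker⟩
  rw [coordPairing_apply, DGMod.coord_gen, DGMod.coord_gen, mul_one]

theorem IsShiftTwistIso.d_eq_zero {𝒜 : ConnCDGA k A} (hd0 : ∀ a : A, 𝒜.d a = 0)
    {L : Type w} [AddCommGroup L] [Module k L] {𝕃 : DGBimod 𝒜 L} {i : ℤ} {φ : A → A} {G : A → L}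
    (hG : IsShiftTwistIso 𝕃 i φ G) (x : L) : 𝕃.d x = 0 := by
  obtain ⟨hbij, hadd, -, -, hchain, -⟩ := hG
  obtain ⟨a, rfl⟩ := hbij.2 x
  rw [← hchain, hd0]
  simpa only [add_zero, left_eq_add] using hadd 0 0

theorem dual_numbers_invertible_bimodule_not_twist_general
    {k : Type u} [Field k]
    {A : Type v} [Ring A] [Algebra k A] (𝒜 : ConnCDGA k A)
    (xb : A) (hx1 : xb ∈ 𝒜.gr 1) (hxsq : xb * xb = 0) (hxne : xb ≠ 0)
    (hspan : 𝒜.gr 1 = Submodule.span k {xb})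
    (hhigh : ∀ i : ℤ, i ≠ 0 → i ≠ 1 → 𝒜.gr i = ⊥)
    (hd0 : ∀ a : A, 𝒜.d a = 0)
    {L : Type w} [AddCommGroup L] [Module k L] (𝕃 : DGBimod 𝒜 L)
    (e : L)
    (hefree : Function.Bijective (fun a : A => 𝕃.smul a e))
    (hegr : ∀ (j : ℤ) (a : A), a ∈ 𝒜.gr j ↔ 𝕃.smul a e ∈ 𝕃.gr j)
    (hecomm : 𝕃.rsmul e xb = 𝕃.smul xb e)
    (hde : 𝕃.d e = 𝕃.smul xb e)
    {L' : Type w} [AddCommGroup L'] [Module k L'] (𝕃' : DGBimod 𝒜 L')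
    (f : L')
    (hffree : Function.Bijective (fun a : A => 𝕃'.smul a f))
    (hfgr : ∀ (j : ℤ) (a : A), a ∈ 𝒜.gr j ↔ 𝕃'.smul a f ∈ 𝕃'.gr j)
    (hfcomm : 𝕃'.rsmul f xb = 𝕃'.smul xb f)
    (hdf : 𝕃'.d f = - 𝕃'.smul xb f) :
    -- (i) `L` is an invertible DG `A`-bimodule, via `θ(e ⊗ f) = 1` and `ω(f ⊗ e) = 1`
    ((∃ θ : L →ₗ[k] L' →ₗ[k] A, IsDGPairing 𝕃 𝕃' θ ∧ θ e f = 1 ∧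
        ∃ hker : balancedRel 𝕃 𝕃' ≤ LinearMap.ker (TensorProduct.lift θ),
          Function.Bijective
            (Submodule.liftQ (balancedRel 𝕃 𝕃') (TensorProduct.lift θ) hker)) ∧
      (∃ ω : L' →ₗ[k] L →ₗ[k] A, IsDGPairing 𝕃' 𝕃 ω ∧ ω f e = 1 ∧
        ∃ hker : balancedRel 𝕃' 𝕃 ≤ LinearMap.ker (TensorProduct.lift ω),
          Function.Bijective
            (Submodule.liftQ (balancedRel 𝕃' 𝕃) (TensorProduct.lift ω) hker))) ∧
    -- (ii) nevertheless `L` is not isomorphic to any `Σⁱ A(φ)`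
    (¬ ∃ (i : ℤ) (φ : A → A) (G : A → L), IsDGAut 𝒜 φ ∧ IsShiftTwistIso 𝕃 i φ G) := by
  refine ⟨⟨DGBimod.exists_isDGPairing_bijective_liftQ hspan hhigh hxsq hx1 hd0 hefree hegr hecomm
      (c := 1) (by rw [one_smul, hde]) hffree hfgr hfcomm (c' := -1) (by rw [neg_one_smul, hdf])
      (add_neg_cancel 1),
    DGBimod.exists_isDGPairing_bijective_liftQ hspan hhigh hxsq hx1 hd0 hffree hfgr hfcomm
      (c := -1) (by rw [neg_one_smul, hdf]) hefree hegr hecomm (c' := 1) (by rw [one_smul, hde])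
      (neg_add_cancel 1)⟩, ?_⟩
  rintro ⟨i, φ, G, -, hG⟩
  refine hxne (hefree.1 ?_)
  change 𝕃.smul xb e = 𝕃.smul 0 e
  rw [← hde, hG.d_eq_zero hd0, 𝕃.zero_smul]

/-- Let `char k ≠ 2` and let `A = k[x]/(x²)` with `|x̄| = 1` and zero
differential (characterised abstractly below). Let `L` be the DG `A`-bimodule free on a
degree-`0` generator `e` with `e·x̄ = x̄·e` and `∂_L(e) = x̄e`, and let `L^∨` be the DG
`A`-bimodule free on a degree-`0` generator `f` with `f·x̄ = x̄·f` and `∂_{L^∨}(f) = -x̄f`.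
Then (i) the pairings `θ` with `θ(e ⊗ f) = 1` and `ω` with `ω(f ⊗ e) = 1` induce
isomorphisms of DG `A`-bimodules `L ⊗_A L^∨ ≅ A` and `L^∨ ⊗_A L ≅ A`, so `L` is an
invertible DG `A`-bimodule; but (ii) `L` is not isomorphic to `Σⁱ A(φ)` as a DG
`A`-bimodule for any `i ∈ ℤ` and any DG algebra automorphism `φ` of `A`. -/
theorem dual_numbers_invertible_bimodule_not_twist
    {k : Type u} [Field k] (h2 : (2 : k) ≠ 0)
    {A : Type v} [Ring A] [Algebra k A] (𝒜 : ConnCDGA k A)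
    (xb : A) (hx1 : xb ∈ 𝒜.gr 1) (hxsq : xb * xb = 0) (hxne : xb ≠ 0)
    (hspan : 𝒜.gr 1 = Submodule.span k {xb})
    (hhigh : ∀ i : ℤ, i ≠ 0 → i ≠ 1 → 𝒜.gr i = ⊥)
    (hd0 : ∀ a : A, 𝒜.d a = 0)
    {L : Type w} [AddCommGroup L] [Module k L] (𝕃 : DGBimod 𝒜 L)
    (e : L) (he : e ∈ 𝕃.gr 0)
    (hefree : Function.Bijective (fun a : A => 𝕃.smul a e))
    (hegr : ∀ (j : ℤ) (a : A), a ∈ 𝒜.gr j ↔ 𝕃.smul a e ∈ 𝕃.gr j)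
    (hecomm : 𝕃.rsmul e xb = 𝕃.smul xb e)
    (hde : 𝕃.d e = 𝕃.smul xb e)
    {L' : Type w} [AddCommGroup L'] [Module k L'] (𝕃' : DGBimod 𝒜 L')
    (f : L') (hf : f ∈ 𝕃'.gr 0)
    (hffree : Function.Bijective (fun a : A => 𝕃'.smul a f))
    (hfgr : ∀ (j : ℤ) (a : A), a ∈ 𝒜.gr j ↔ 𝕃'.smul a f ∈ 𝕃'.gr j)
    (hfcomm : 𝕃'.rsmul f xb = 𝕃'.smul xb f)
    (hdf : 𝕃'.d f = - 𝕃'.smul xb f) :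
    -- (i) `L` is an invertible DG `A`-bimodule, via `θ(e ⊗ f) = 1` and `ω(f ⊗ e) = 1`
    ((∃ θ : L →ₗ[k] L' →ₗ[k] A, IsDGPairing 𝕃 𝕃' θ ∧ θ e f = 1 ∧
        ∃ hker : balancedRel 𝕃 𝕃' ≤ LinearMap.ker (TensorProduct.lift θ),
          Function.Bijective
            (Submodule.liftQ (balancedRel 𝕃 𝕃') (TensorProduct.lift θ) hker)) ∧
      (∃ ω : L' →ₗ[k] L →ₗ[k] A, IsDGPairing 𝕃' 𝕃 ω ∧ ω f e = 1 ∧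
        ∃ hker : balancedRel 𝕃' 𝕃 ≤ LinearMap.ker (TensorProduct.lift ω),
          Function.Bijective
            (Submodule.liftQ (balancedRel 𝕃' 𝕃) (TensorProduct.lift ω) hker))) ∧
    -- (ii) nevertheless `L` is not isomorphic to any `Σⁱ A(φ)`
    (¬ ∃ (i : ℤ) (φ : A → A) (G : A → L), IsDGAut 𝒜 φ ∧ IsShiftTwistIso 𝕃 i φ G) :=
  dual_numbers_invertible_bimodule_not_twist_general 𝒜 xb hx1 hxsq hxne hspan hhigh hd0 𝕃 e hefree
    hegr hecomm hde 𝕃' f hffree hfgr hfcomm hdf
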